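/- Let 0 < α < 1, r ≥ 1, T > 0, N ≥ 1, and let t_k = T(k/N)^r be the graded mesh with fitted interpolant v̄ of a function v : [0,t_N] → ℝ on [0,t_n]. Suppose v(0) = 0, v is twice continuously differentiable on (0,t_N], and for some constant C₀: |v′(t)| ≤ C₀ t^{2α−1} and |v″(t)| ≤ C₀ t^{2α−2} for 0 < t ≤ min{1,t_N}, and |v′(t)| ≤ C₀ and |v″(t)| ≤ C₀ for 1 ≤ t ≤ t_N. Then there exists a constant C depending only on α, r and C₀ (independent of T, N, k) such that for every k with 1 ≤ k ≤ N−1, sup_{s ∈ [t_k, t_{k+1}]} | (v − v̄)(s) | ≤ C τ_{k+1}² max{1, t_k^{2α−2}} and sup_{s ∈ (t_k, t_{k+1})} | (v − v̄)′(s) | ≤ C τ_{k+1} max{1, t_k^{2α−2}}, where τ_{k+1} = t_{k+1} − t_k. -/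

import Mathlib

open MeasureTheory

/-- The graded temporal mesh `t_n = T (n/N)^r`. -/
noncomputable def mesh (r T : ℝ) (N : ℕ) (k : ℕ) : ℝ :=
  T * ((k : ℝ) / (N : ℝ)) ^ r

/-- The fitted basis functions `φ_k` on the mesh `t`, exact for `1` and `s^α`. -/
noncomputable def fittedBasis (α : ℝ) (t : ℕ → ℝ) (N : ℕ) (k : ℕ) (s : ℝ) : ℝ :=
  if k = 0 then
    if 0 ≤ s ∧ s ≤ t 1 then (t 1 ^ α - s ^ α) / t 1 ^ α else 0
  else if k = N then
    if t (N - 1) ≤ s ∧ s ≤ t N then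
      (s ^ α - t (N - 1) ^ α) / (t N ^ α - t (N - 1) ^ α)
    else 0
  else
    if t (k - 1) ≤ s ∧ s ≤ t k then
      (s ^ α - t (k - 1) ^ α) / (t k ^ α - t (k - 1) ^ α)
    else if t k ≤ s ∧ s ≤ t (k + 1) then
      (t (k + 1) ^ α - s ^ α) / (t (k + 1) ^ α - t k ^ α)
    else 0

/-- The discrete fitted Caputo operator `D_N^α` acting on grid values `u`. -/
noncomputable def discreteCaputo (α : ℝ) (t : ℕ → ℝ) (u : ℕ → ℝ) (n : ℕ) : ℝ :=
  (α / Real.Gamma (1 - α)) * ∑ k ∈ Finset.range n,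
    (u (k + 1) - u k) / (t (k + 1) ^ α - t k ^ α) *
      ∫ s in Set.Ioo (t k) (t (k + 1)), s ^ (α - 1) * (t n - s) ^ (-α)

/-!
On a cell `[a, b] = [t_k, t_{k+1}]` the fitted interpolant is `v a + c (s^α - a^α)` with
`c = (v b - v a) / (b^α - a^α)`. The error `e` vanishes at `a` and `b`, so Rolle's theorem and the
mean value inequality give `|e'| ≤ M (b - a)` and `|e| ≤ M (b - a)²` for any bound `M` of `|e''|`.
Besides `v''`, the second derivative `e''` contains `c α (α - 1) s^(α - 2)`. Cauchy's mean value
theorem writes `c α = v'(ξ) ξ^(1 - α)` with `ξ ∈ (a, b)`, and on the graded mesh `b ≤ 2^r a`;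
together with the bounds on `v'` this makes `M = O(max 1 (a^(2α - 2)))`.
-/

open Set

theorem abs_deriv_le_of_abs_deriv2_le {e e' e'' : ℝ → ℝ} {a b M : ℝ} (hab : a < b)
    (he : ∀ x ∈ Icc a b, HasDerivAt e (e' x) x)
    (he' : ∀ x ∈ Icc a b, HasDerivAt e' (e'' x) x)
    (hM : ∀ x ∈ Icc a b, |e'' x| ≤ M) (hea : e a = 0) (heb : e b = 0) :
    ∀ x ∈ Icc a b, |e' x| ≤ M * (b - a) := by
  obtain ⟨ζ, hζ, he'ζ⟩ := exists_hasDerivAt_eq_zero hab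
    (fun x hx ↦ (he x hx).continuousAt.continuousWithinAt) (hea.trans heb.symm)
    (fun x hx ↦ he x (Ioo_subset_Icc_self hx))
  have hζ' : ζ ∈ Icc a b := Ioo_subset_Icc_self hζ
  intro x hx
  have hM0 : 0 ≤ M := (abs_nonneg _).trans (hM x hx)
  have lip := (convex_Icc a b).norm_image_sub_le_of_norm_hasDerivWithin_le
    (fun y hy ↦ (he' y hy).hasDerivWithinAt) hM hζ' hx
  simp only [Real.norm_eq_abs, he'ζ, sub_zero] at lip
  calc |e' x| ≤ M * |x - ζ| := lip
    _ ≤ M * (b - a) := by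
      gcongr
      rw [abs_le]
      constructor <;> linarith [hx.1, hx.2, hζ'.1, hζ'.2]

theorem abs_le_of_abs_deriv2_le {e e' e'' : ℝ → ℝ} {a b M : ℝ} (hab : a < b)
    (he : ∀ x ∈ Icc a b, HasDerivAt e (e' x) x)
    (he' : ∀ x ∈ Icc a b, HasDerivAt e' (e'' x) x)
    (hM : ∀ x ∈ Icc a b, |e'' x| ≤ M) (hea : e a = 0) (heb : e b = 0) :
    ∀ x ∈ Icc a b, |e x| ≤ M * (b - a) ^ 2 := by
  intro x hx
  have ha : a ∈ Icc a b := left_mem_Icc.mpr hab.le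
  have hM0 : 0 ≤ M := (abs_nonneg _).trans (hM x hx)
  have lip := (convex_Icc a b).norm_image_sub_le_of_norm_hasDerivWithin_le
    (fun y hy ↦ (he y hy).hasDerivWithinAt)
    (abs_deriv_le_of_abs_deriv2_le hab he he' hM hea heb) ha hx
  simp only [Real.norm_eq_abs, hea, sub_zero, abs_of_nonneg (sub_nonneg.mpr hx.1)] at lip
  calc |e x| ≤ M * (b - a) * (x - a) := lip
    _ ≤ M * (b - a) * (b - a) := by gcongr; exact hx.2
    _ = M * (b - a) ^ 2 := by ring

theorem mesh_zero {r T : ℝ} {N : ℕ} (hr : r ≠ 0) : mesh r T N 0 = 0 := by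
  simp [mesh, Real.zero_rpow hr]

theorem mesh_strictMono {r T : ℝ} {N : ℕ} (hr : 0 < r) (hT : 0 < T) (hN : N ≠ 0) :
    StrictMono (mesh r T N) :=
  fun _ _ _ ↦ by unfold mesh; gcongr

theorem mesh_succ_le {r T : ℝ} {N k : ℕ} (hr : 0 ≤ r) (hT : 0 ≤ T) (hk : 1 ≤ k) :
    mesh r T N (k + 1) ≤ 2 ^ r * mesh r T N k := by
  have hk' : ((k + 1 : ℕ) : ℝ) / N ≤ 2 * (k / N) := by
    have : (1 : ℝ) ≤ k := by exact_mod_cast hk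
    rw [← mul_div_assoc]; gcongr; push_cast; linarith
  calc mesh r T N (k + 1) ≤ T * (2 * (k / N)) ^ r := by unfold mesh; gcongr
    _ = 2 ^ r * mesh r T N k := by
        rw [mesh, Real.mul_rpow (by norm_num) (by positivity)]; ring

noncomputable def fittedCellInterp (α a b va vb s : ℝ) : ℝ :=
  va + (vb - va) / (b ^ α - a ^ α) * (s ^ α - a ^ α)

theorem hasDerivAt_fittedCellInterp {α a b va vb x : ℝ} (hx : 0 < x) :
    HasDerivAt (fittedCellInterp α a b va vb)
      ((vb - va) / (b ^ α - a ^ α) * (α * x ^ (α - 1))) x :=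
  (((Real.hasDerivAt_rpow_const (Or.inl hx.ne')).sub_const _).const_mul _).const_add _

section FittedBasis

variable {α : ℝ} {t : ℕ → ℝ} {N j k : ℕ} {s : ℝ}

theorem strictMono_rpow_comp (ht : StrictMono t) (ht0 : 0 ≤ t 0) (hα : 0 < α) :
    StrictMono fun i ↦ t i ^ α :=
  fun i _ h ↦ Real.rpow_lt_rpow (ht0.trans (ht.monotone (Nat.zero_le i))) (ht h) hα

-- Every other basis function is supported on cells that meet `[t k, t (k + 1)]` at most in a
-- node, and it vanishes there.
theorem fittedBasis_eq_zero (ht : StrictMono t) (hs : s ∈ Icc (t k) (t (k + 1)))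
    (hjk : j ≠ k) (hjk' : j ≠ k + 1) : fittedBasis α t N j s = 0 := by
  obtain ⟨hks, hsk⟩ := hs
  have idx_le {i l : ℕ} (h : t i ≤ t l) : i ≤ l := ht.le_iff_le.mp h
  unfold fittedBasis
  split_ifs with hj0 h0 hjN hN hl hr
  · rw [le_antisymm h0.2 ((ht.monotone (by omega)).trans hks), sub_self, zero_div]
  · rfl
  · have hidx : N - 1 = k + 1 := by
      have := idx_le (hN.1.trans hsk); have := idx_le (hks.trans hN.2); omega
    rw [le_antisymm (hidx ▸ hsk) hN.1, sub_self, zero_div]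
  · rfl
  · have hj : j - 1 = k + 1 := by
      have := idx_le (hl.1.trans hsk); have := idx_le (hks.trans hl.2); omega
    rw [le_antisymm (hj ▸ hsk) hl.1, sub_self, zero_div]
  · have hj : j + 1 = k := by
      have := idx_le (hr.1.trans hsk); have := idx_le (hks.trans hr.2); omega
    rw [le_antisymm hr.2 (hj ▸ hks), sub_self, zero_div]
  · rfl

theorem fittedBasis_self (ht : StrictMono t) (ht0 : 0 ≤ t 0) (hα : 0 < α) (hk : 1 ≤ k)
    (hkN : k + 1 ≤ N) (hs : s ∈ Icc (t k) (t (k + 1))) :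
    fittedBasis α t N k s = (t (k + 1) ^ α - s ^ α) / (t (k + 1) ^ α - t k ^ α) := by
  have htα := strictMono_rpow_comp ht ht0 hα
  unfold fittedBasis
  rw [if_neg (by omega), if_neg (by omega)]
  split_ifs with hl hr
  · rw [le_antisymm hl.2 hs.1, div_self (sub_pos.mpr (htα (by omega : k - 1 < k))).ne',
      div_self (sub_pos.mpr (htα k.lt_succ_self)).ne']
  · rfl
  · exact absurd hs hr

theorem fittedBasis_succ (hs : s ∈ Icc (t k) (t (k + 1))) :
    fittedBasis α t N (k + 1) s = (s ^ α - t k ^ α) / (t (k + 1) ^ α - t k ^ α) := by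
  have hcell : t k ≤ s ∧ s ≤ t (k + 1) := hs
  unfold fittedBasis
  rw [if_neg k.succ_ne_zero]
  by_cases hkN : k + 1 = N
  · subst hkN; rw [if_pos rfl, Nat.add_sub_cancel, if_pos hcell]
  · rw [if_neg hkN, Nat.add_sub_cancel, if_pos hcell]

theorem sum_fittedBasis_mul_eq_fittedCellInterp (ht : StrictMono t) (ht0 : 0 ≤ t 0)
    (hα : 0 < α) (hk : 1 ≤ k) (hkN : k + 1 ≤ N) (w : ℕ → ℝ)
    (hs : s ∈ Icc (t k) (t (k + 1))) :
    ∑ j ∈ Finset.range (N + 1), fittedBasis α t N j s * w j =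
      fittedCellInterp α (t k) (t (k + 1)) (w k) (w (k + 1)) s := by
  have hD : t (k + 1) ^ α - t k ^ α ≠ 0 :=
    (sub_pos.mpr (strictMono_rpow_comp ht ht0 hα k.lt_succ_self)).ne'
  rw [Finset.sum_eq_add_of_mem k (k + 1) (by simp; omega) (by simp; omega) (by omega)
    (fun j _ hj ↦ by rw [fittedBasis_eq_zero ht hs hj.1 hj.2, zero_mul]),
    fittedBasis_self ht ht0 hα hk hkN hs, fittedBasis_succ hs, fittedCellInterp]
  field_simp
  ring

end FittedBasis

section CellError

variable {α C₀ L R a b x : ℝ} {v v' v'' : ℝ → ℝ}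

theorem abs_le_mul_max_one_rpow (hα1 : α < 1) (hC₀ : 0 ≤ C₀)
    (hsmall : ∀ s ∈ Ioc (0 : ℝ) (min 1 L), |v'' s| ≤ C₀ * s ^ (2 * α - 2))
    (hlarge : ∀ s : ℝ, 1 ≤ s → s ≤ L → |v'' s| ≤ C₀)
    (ha : 0 < a) (hax : a ≤ x) (hxL : x ≤ L) :
    |v'' x| ≤ C₀ * max 1 (a ^ (2 * α - 2)) := by
  rcases le_total x 1 with hx1 | hx1
  · calc |v'' x| ≤ C₀ * x ^ (2 * α - 2) := hsmall x ⟨ha.trans_le hax, le_min hx1 hxL⟩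
      _ ≤ C₀ * a ^ (2 * α - 2) :=
        mul_le_mul_of_nonneg_left (Real.rpow_le_rpow_of_nonpos ha hax (by linarith)) hC₀
      _ ≤ C₀ * max 1 (a ^ (2 * α - 2)) := by gcongr; exact le_max_right _ _
  · exact (hlarge x hx1 hxL).trans (le_mul_of_one_le_right hC₀ (le_max_left _ _))

theorem abs_mul_rpow_mul_rpow_le (hα0 : 0 < α) (hα1 : α < 1) (hC₀ : 0 ≤ C₀)
    (hsmall : ∀ s ∈ Ioc (0 : ℝ) (min 1 L), |v' s| ≤ C₀ * s ^ (2 * α - 1))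
    (hlarge : ∀ s : ℝ, 1 ≤ s → s ≤ L → |v' s| ≤ C₀)
    {ξ : ℝ} (hR : 1 ≤ R) (ha : 0 < a) (haξ : a ≤ ξ) (hξR : ξ ≤ R * a) (hξL : ξ ≤ L) :
    |v' ξ| * ξ ^ (1 - α) * a ^ (α - 2) ≤ C₀ * R ^ 2 * max 1 (a ^ (2 * α - 2)) := by
  have hξ : 0 < ξ := ha.trans_le haξ
  rcases le_total ξ 1 with hξ1 | hξ1
  · calc |v' ξ| * ξ ^ (1 - α) * a ^ (α - 2)
        ≤ C₀ * ξ ^ (2 * α - 1) * ξ ^ (1 - α) * a ^ (α - 2) := by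
          gcongr; exact hsmall ξ ⟨hξ, le_min hξ1 hξL⟩
      _ = C₀ * ξ ^ α * a ^ (α - 2) := by
          rw [mul_assoc C₀, ← Real.rpow_add hξ]; ring_nf
      _ ≤ C₀ * (R * a) ^ α * a ^ (α - 2) := by gcongr
      _ = C₀ * R ^ α * a ^ (2 * α - 2) := by
          rw [Real.mul_rpow (by linarith) ha.le, show 2 * α - 2 = α + (α - 2) by ring,
            Real.rpow_add ha]
          ring
      _ ≤ C₀ * R ^ 2 * max 1 (a ^ (2 * α - 2)) := by
          gcongr
          · calc R ^ α ≤ R := Real.rpow_le_self_of_one_le hR hα1.le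
              _ ≤ R ^ 2 := by nlinarith
          · exact le_max_right _ _
  · have haR : R⁻¹ ≤ a := by
      rw [inv_le_iff_one_le_mul₀ (by linarith)]; linarith
    calc |v' ξ| * ξ ^ (1 - α) * a ^ (α - 2)
        ≤ C₀ * ξ * a ^ (α - 2) := by
          gcongr
          · exact hlarge ξ hξ1 hξL
          · exact Real.rpow_le_self_of_one_le hξ1 (by linarith)
      _ ≤ C₀ * (R * a) * a ^ (α - 2) := by gcongr
      _ = C₀ * R * a ^ (α - 1) := by
          rw [show α - 1 = 1 + (α - 2) by ring, Real.rpow_add ha, Real.rpow_one]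
          ring
      _ ≤ C₀ * R * R := by
          gcongr
          calc a ^ (α - 1) ≤ R⁻¹ ^ (α - 1) :=
                Real.rpow_le_rpow_of_nonpos (by positivity) haR (by linarith)
            _ = R ^ (1 - α) := by
                rw [Real.inv_rpow (by linarith), ← Real.rpow_neg (by linarith), neg_sub]
            _ ≤ R := Real.rpow_le_self_of_one_le hR (by linarith)
      _ ≤ C₀ * R ^ 2 * max 1 (a ^ (2 * α - 2)) := by
          rw [mul_assoc, ← sq]; exact le_mul_of_one_le_right (by positivity) (le_max_left _ _)

theorem abs_slope_mul_deriv2_rpow_le (hα0 : 0 < α) (hα1 : α < 1) (hC₀ : 0 ≤ C₀)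
    (hsmall : ∀ s ∈ Ioc (0 : ℝ) (min 1 L), |v' s| ≤ C₀ * s ^ (2 * α - 1))
    (hlarge : ∀ s : ℝ, 1 ≤ s → s ≤ L → |v' s| ≤ C₀)
    (hR : 1 ≤ R) (ha : 0 < a) (hab : a < b) (hbR : b ≤ R * a) (hbL : b ≤ L)
    (hv : ∀ y ∈ Icc a b, HasDerivAt v (v' y) y) (hx : a ≤ x) :
    |(v b - v a) / (b ^ α - a ^ α) * (α * ((α - 1) * x ^ (α - 2)))| ≤
      C₀ * R ^ 2 * max 1 (a ^ (2 * α - 2)) := by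
  set c := (v b - v a) / (b ^ α - a ^ α)
  have hD : b ^ α - a ^ α ≠ 0 := (sub_pos.mpr (Real.rpow_lt_rpow ha.le hab hα0)).ne'
  obtain ⟨ξ, hξ, hcauchy⟩ := exists_ratio_hasDerivAt_eq_ratio_slope v v' hab
    (fun y hy ↦ (hv y hy).continuousAt.continuousWithinAt)
    (fun y hy ↦ hv y (Ioo_subset_Icc_self hy)) (fun y ↦ y ^ α) (fun y ↦ α * y ^ (α - 1))
    (continuousOn_id.rpow_const fun _ _ ↦ Or.inr hα0.le)
    (fun y hy ↦ Real.hasDerivAt_rpow_const (Or.inl (ha.trans hy.1).ne'))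
  have hξ0 : 0 < ξ := ha.trans hξ.1
  have hc : |c| * α = |v' ξ| * ξ ^ (1 - α) := by
    have hv'ξ : v' ξ = c * (α * ξ ^ (α - 1)) := by
      simp only [c]; field_simp; linarith
    rw [hv'ξ, abs_mul, abs_mul, abs_of_pos hα0, abs_of_pos (Real.rpow_pos_of_pos hξ0 _),
      mul_assoc, mul_assoc, ← Real.rpow_add hξ0]
    simp
  calc |c * (α * ((α - 1) * x ^ (α - 2)))| = |c| * α * ((1 - α) * x ^ (α - 2)) := by
        rw [abs_mul, abs_mul, abs_mul, abs_of_pos hα0,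
          abs_of_neg (show α - 1 < 0 by linarith),
          abs_of_pos (Real.rpow_pos_of_pos (ha.trans_le hx) _)]
        ring
    _ ≤ |c| * α * (1 * a ^ (α - 2)) := by
        have hxa : x ^ (α - 2) ≤ a ^ (α - 2) := Real.rpow_le_rpow_of_nonpos ha hx (by linarith)
        have hx0 : 0 ≤ x ^ (α - 2) := Real.rpow_nonneg (ha.le.trans hx) _
        exact mul_le_mul_of_nonneg_left (mul_le_mul (by linarith) hxa hx0 zero_le_one)
          (by positivity)
    _ = |v' ξ| * ξ ^ (1 - α) * a ^ (α - 2) := by rw [hc]; ring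
    _ ≤ C₀ * R ^ 2 * max 1 (a ^ (2 * α - 2)) :=
        abs_mul_rpow_mul_rpow_le hα0 hα1 hC₀ hsmall hlarge hR ha hξ.1.le
          (hξ.2.le.trans hbR) (hξ.2.le.trans hbL)

theorem abs_sub_fittedCellInterp_le (hα0 : 0 < α) (hα1 : α < 1) (hC₀ : 0 ≤ C₀)
    (hsmall : ∀ s ∈ Ioc (0 : ℝ) (min 1 L),
      |v' s| ≤ C₀ * s ^ (2 * α - 1) ∧ |v'' s| ≤ C₀ * s ^ (2 * α - 2))
    (hlarge : ∀ s : ℝ, 1 ≤ s → s ≤ L → |v' s| ≤ C₀ ∧ |v'' s| ≤ C₀)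
    (hR : 1 ≤ R) (ha : 0 < a) (hab : a < b) (hbR : b ≤ R * a) (hbL : b ≤ L)
    (hv : ∀ x ∈ Icc a b, HasDerivAt v (v' x) x ∧ HasDerivAt v' (v'' x) x) :
    (∀ s ∈ Icc a b, |v s - fittedCellInterp α a b (v a) (v b) s| ≤
      C₀ * (1 + R ^ 2) * (b - a) ^ 2 * max 1 (a ^ (2 * α - 2))) ∧
    (∀ s ∈ Icc a b, |deriv (fun x ↦ v x - fittedCellInterp α a b (v a) (v b) x) s| ≤
      C₀ * (1 + R ^ 2) * (b - a) * max 1 (a ^ (2 * α - 2))) := by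
  set c := (v b - v a) / (b ^ α - a ^ α)
  set M := C₀ * (1 + R ^ 2) * max 1 (a ^ (2 * α - 2))
  have hD : b ^ α - a ^ α ≠ 0 := (sub_pos.mpr (Real.rpow_lt_rpow ha.le hab hα0)).ne'
  have he : ∀ x ∈ Icc a b, HasDerivAt (fun x ↦ v x - fittedCellInterp α a b (v a) (v b) x)
      (v' x - c * (α * x ^ (α - 1))) x := fun x hx ↦
    (hv x hx).1.sub (hasDerivAt_fittedCellInterp (ha.trans_le hx.1))
  have he' : ∀ x ∈ Icc a b, HasDerivAt (fun x ↦ v' x - c * (α * x ^ (α - 1)))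
      (v'' x - c * (α * ((α - 1) * x ^ (α - 2)))) x := fun x hx ↦ by
    have hpow := Real.hasDerivAt_rpow_const (p := α - 1) (Or.inl (ha.trans_le hx.1).ne')
    rw [sub_sub, one_add_one_eq_two] at hpow
    exact (hv x hx).2.sub ((hpow.const_mul α).const_mul c)
  have hM : ∀ x ∈ Icc a b, |v'' x - c * (α * ((α - 1) * x ^ (α - 2)))| ≤ M := fun x hx ↦
    calc _ ≤ |v'' x| + |c * (α * ((α - 1) * x ^ (α - 2)))| := abs_sub _ _
      _ ≤ C₀ * max 1 (a ^ (2 * α - 2)) + C₀ * R ^ 2 * max 1 (a ^ (2 * α - 2)) :=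
        add_le_add
          (abs_le_mul_max_one_rpow hα1 hC₀ (fun s hs ↦ (hsmall s hs).2)
            (fun s h1 hL ↦ (hlarge s h1 hL).2) ha hx.1 (hx.2.trans hbL))
          (abs_slope_mul_deriv2_rpow_le hα0 hα1 hC₀ (fun s hs ↦ (hsmall s hs).1)
            (fun s h1 hL ↦ (hlarge s h1 hL).1) hR ha hab hbR hbL
            (fun y hy ↦ (hv y hy).1) hx.1)
      _ = M := by ring
  have hea : v a - fittedCellInterp α a b (v a) (v b) a = 0 := by
    simp [fittedCellInterp]
  have heb : v b - fittedCellInterp α a b (v a) (v b) b = 0 := by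
    rw [fittedCellInterp]; field_simp; ring
  constructor
  · intro s hs
    calc _ ≤ M * (b - a) ^ 2 := abs_le_of_abs_deriv2_le hab he he' hM hea heb s hs
      _ = _ := by ring
  · intro s hs
    rw [(he s hs).deriv]
    calc _ ≤ M * (b - a) := abs_deriv_le_of_abs_deriv2_le hab he he' hM hea heb s hs
      _ = _ := by ring

end CellError

/-- Interpolation error bounds (inter-error) and (inter-error-FD) of the paper:
for a function `v` with `v(0)=0` satisfying the derivative bounds of Theorems 1
and 3, the fitted interpolant `v̄` satisfies, on each interior mesh interval,
`|v − v̄| ≤ C τ_{k+1}² max{1, t_k^{2α−2}}` and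
`|(v − v̄)′| ≤ C τ_{k+1} max{1, t_k^{2α−2}}`, with `C` independent of `T, N, k`. -/
theorem fitted_interpolation_error (α r C₀ : ℝ) (hα0 : 0 < α) (hα1 : α < 1)
    (hr : 1 ≤ r) (hC₀ : 0 ≤ C₀) :
    ∃ C : ℝ, ∀ T : ℝ, 0 < T → ∀ N : ℕ, 1 ≤ N → ∀ v v' v'' : ℝ → ℝ,
      v 0 = 0 →
      (∀ s ∈ Set.Ioc (0 : ℝ) (mesh r T N N),
        HasDerivAt v (v' s) s ∧ HasDerivAt v' (v'' s) s) →
      ContinuousOn v'' (Set.Ioc 0 (mesh r T N N)) →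
      (∀ s ∈ Set.Ioc (0 : ℝ) (min 1 (mesh r T N N)),
        |v' s| ≤ C₀ * s ^ (2 * α - 1) ∧ |v'' s| ≤ C₀ * s ^ (2 * α - 2)) →
      (∀ s : ℝ, 1 ≤ s → s ≤ mesh r T N N → |v' s| ≤ C₀ ∧ |v'' s| ≤ C₀) →
      ∀ k : ℕ, 1 ≤ k → k + 1 ≤ N →
        (∀ s ∈ Set.Icc (mesh r T N k) (mesh r T N (k + 1)),
          |v s - ∑ j ∈ Finset.range (N + 1),
              fittedBasis α (mesh r T N) N j s * v (mesh r T N j)|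
            ≤ C * (mesh r T N (k + 1) - mesh r T N k) ^ 2 *
                max 1 (mesh r T N k ^ (2 * α - 2))) ∧
        (∀ s ∈ Set.Ioo (mesh r T N k) (mesh r T N (k + 1)),
          |deriv (fun x => v x - ∑ j ∈ Finset.range (N + 1),
              fittedBasis α (mesh r T N) N j x * v (mesh r T N j)) s|
            ≤ C * (mesh r T N (k + 1) - mesh r T N k) *
                max 1 (mesh r T N k ^ (2 * α - 2))) := by
  refine ⟨C₀ * (1 + (2 ^ r) ^ 2), fun T hT N hN v v' v'' _ hv _ hsmall hlarge k hk hkN ↦ ?_⟩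
  set t := mesh r T N
  have ht0 : t 0 = 0 := mesh_zero (by linarith)
  have ht : StrictMono t := mesh_strictMono (by linarith) hT (by omega)
  have ha : 0 < t k := ht0 ▸ ht (by omega : 0 < k)
  have hbL : t (k + 1) ≤ t N := ht.monotone hkN
  have hcell := abs_sub_fittedCellInterp_le hα0 hα1 hC₀ hsmall hlarge
    (Real.one_le_rpow one_le_two (by linarith)) ha (ht k.lt_succ_self)
    (mesh_succ_le (by linarith) hT.le hk) hbL
    (fun x hx ↦ hv x ⟨ha.trans_le hx.1, hx.2.trans hbL⟩)
  have hsum (s : ℝ) (hs : s ∈ Icc (t k) (t (k + 1))) :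
      ∑ j ∈ Finset.range (N + 1), fittedBasis α t N j s * v (t j) =
        fittedCellInterp α (t k) (t (k + 1)) (v (t k)) (v (t (k + 1))) s :=
    sum_fittedBasis_mul_eq_fittedCellInterp ht ht0.ge hα0 hk hkN (fun j ↦ v (t j)) hs
  refine ⟨fun s hs ↦ hsum s hs ▸ hcell.1 s hs, fun s hs ↦ ?_⟩
  have hloc : (fun x ↦ v x - ∑ j ∈ Finset.range (N + 1), fittedBasis α t N j x * v (t j))
      =ᶠ[nhds s]
        fun x ↦ v x - fittedCellInterp α (t k) (t (k + 1)) (v (t k)) (v (t (k + 1))) x := by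
    filter_upwards [Icc_mem_nhds hs.1 hs.2] with x hx
    rw [hsum x hx]
  rw [hloc.deriv_eq]
  exact hcell.2 s (Ioo_subset_Icc_self hs)
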